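/- arXiv:2203.12584 — 2 statements merged into one kernel-verified Lean document; each statement's English description precedes it below -/
import Mathlib

section
/- Let ε > 0, v ≥ 0, τ ≥ 0, and consider the uniformly translating diffuse-interface profile φ(t,x) = tanh((x − v t)/(√2 ε)). Then the maximal pointwise displacement over one time step of length τ is max_{x ∈ ℝ} |φ(τ, x) − φ(0, x)| = 2 tanh( v τ / (2√2 ε) ), and the maximum is attained at the midpoint x = v τ / 2; i.e., the set { |φ(τ,x) − φ(0,x)| : x ∈ ℝ } has greatest element 2 tanh(v τ/(2√2 ε)). -/
/-! The difference of two values of `tanh` is `sinh (x - y) / (cosh x cosh y)`, and the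
product-to-sum formula gives `cosh x cosh y ≥ (1 + cosh (x - y)) / 2 = cosh ((x - y) / 2) ^ 2`,
with equality exactly when `x + y = 0`. Hence
`|tanh x - tanh y| ≤ sinh |x - y| / cosh ((x - y) / 2) ^ 2 = 2 tanh (|x - y| / 2)`,
with equality at the symmetric pair `x = -y`. For the translating profile the two arguments
differ by `v τ / (√2 ε)`, and they are symmetric at the midpoint `x = v τ / 2`. -/

open Real

namespace Real

theorem tanh_nonneg {x : ℝ} (hx : 0 ≤ x) : 0 ≤ tanh x := by
  rw [tanh_eq_sinh_div_cosh]
  exact div_nonneg (sinh_nonneg_iff.mpr hx) (cosh_pos x).le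

theorem tanh_sub_tanh (x y : ℝ) : tanh x - tanh y = sinh (x - y) / (cosh x * cosh y) := by
  rw [tanh_eq_sinh_div_cosh, tanh_eq_sinh_div_cosh, sinh_sub]
  field_simp [(cosh_pos x).ne', (cosh_pos y).ne']

theorem two_mul_tanh_half (x : ℝ) : 2 * tanh (x / 2) = sinh x / cosh (x / 2) ^ 2 := by
  have hsinh : sinh x = 2 * sinh (x / 2) * cosh (x / 2) := by
    rw [← sinh_two_mul, mul_div_cancel₀ x two_ne_zero]
  rw [tanh_eq_sinh_div_cosh, hsinh]
  field_simp [(cosh_pos (x / 2)).ne']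

theorem cosh_half_sub_sq_le_cosh_mul_cosh (x y : ℝ) :
    cosh ((x - y) / 2) ^ 2 ≤ cosh x * cosh y := by
  have hsub : cosh (x - y) = 2 * cosh ((x - y) / 2) ^ 2 - 1 := by
    have h := cosh_two_mul ((x - y) / 2)
    rw [mul_div_cancel₀ (x - y) two_ne_zero] at h
    linarith [cosh_sq ((x - y) / 2)]
  have hprod : cosh x * cosh y = (cosh (x + y) + cosh (x - y)) / 2 := by
    rw [cosh_add, cosh_sub]
    ring
  linarith [one_le_cosh (x + y)]

theorem abs_tanh_sub_tanh_le (x y : ℝ) : |tanh x - tanh y| ≤ 2 * tanh (|x - y| / 2) := by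
  have hcosh : cosh (|x - y| / 2) = cosh ((x - y) / 2) := by
    rw [← abs_two, ← abs_div, abs_two, cosh_abs]
  rw [tanh_sub_tanh, abs_div, abs_sinh, abs_of_pos (mul_pos (cosh_pos x) (cosh_pos y)),
    two_mul_tanh_half, hcosh]
  exact div_le_div_of_nonneg_left (sinh_nonneg_iff.mpr (abs_nonneg _))
    (by positivity) (cosh_half_sub_sq_le_cosh_mul_cosh x y)

theorem abs_tanh_neg_sub_tanh {x : ℝ} (hx : 0 ≤ x) : |tanh (-x) - tanh x| = 2 * tanh x := by
  rw [tanh_neg, ← neg_add', abs_neg, ← two_mul, abs_of_nonneg (by linarith [tanh_nonneg hx])]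

end Real

theorem stmt6 (ε v τ : ℝ) (hε : 0 < ε) (hv : 0 ≤ v) (hτ : 0 ≤ τ)
    (φ : ℝ → ℝ → ℝ)
    (hφ : ∀ t x : ℝ, φ t x = Real.tanh ((x - v * t) / (Real.sqrt 2 * ε))) :
    IsGreatest (Set.range fun x : ℝ => |φ τ x - φ 0 x|)
      (2 * Real.tanh (v * τ / (2 * Real.sqrt 2 * ε))) ∧
    |φ τ (v * τ / 2) - φ 0 (v * τ / 2)| = 2 * Real.tanh (v * τ / (2 * Real.sqrt 2 * ε)) := by
  set b := v * τ / (2 * Real.sqrt 2 * ε) with hb_def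
  have hb : 0 ≤ b := by positivity
  have hmid : |φ τ (v * τ / 2) - φ 0 (v * τ / 2)| = 2 * tanh b := by
    rw [hφ, hφ, ← abs_tanh_neg_sub_tanh hb, hb_def]
    congr 3 <;> ring
  refine ⟨⟨⟨v * τ / 2, hmid⟩, ?_⟩, hmid⟩
  rintro _ ⟨x, rfl⟩
  have hgap : |(x - v * τ) / (√2 * ε) - (x - v * 0) / (√2 * ε)| / 2 = b := by
    have hdiff : (x - v * τ) / (√2 * ε) - (x - v * 0) / (√2 * ε) = -(2 * b) := by
      rw [hb_def]; ring
    rw [hdiff, abs_neg, abs_of_nonneg (by positivity)]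
    ring
  simpa only [hφ, hgap] using
    abs_tanh_sub_tanh_le ((x - v * τ) / (√2 * ε)) ((x - v * 0) / (√2 * ε))
end

section
/- Let d ≥ 1 and let ρ : ℝ^d → ℝ and u, v : ℝ^d → ℝ^d be continuously differentiable, with u compactly supported and solenoidal, i.e., div u = 0 everywhere. Then ∫_{ℝ^d} [ Σ_{i,j} ∂_j(ρ u_i u_j) v_i + Σ_{i,j} ∂_j(ρ v_i u_j) u_i ] dx = ∫_{ℝ^d} (u·v)(u·∇ρ) dx. Consequently, the skew-symmetric stabilization form s(U;V) = −(1/2)∫ ∇·(ρ u ⊗ u)·v − (1/2)∫ ∇·(ρ v ⊗ u)·u + (1/2)∫ (u·v)(u·∇ρ) (the boundary term vanishing by compact support) is identically zero for solenoidal u, i.e., it forms a partition of zero. -/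
open MeasureTheory

/-- Partial derivative in the j-th coordinate direction of a scalar field on ℝ^d. -/
noncomputable def pd {d : ℕ} (j : Fin d) (f : (Fin d → ℝ) → ℝ) (x : Fin d → ℝ) : ℝ :=
  fderiv ℝ f x (Pi.single j 1)

/-!
With `w = ρ uⱼ`, the product rule gives `∂ⱼ(w uᵢ) vᵢ + ∂ⱼ(w vᵢ) uᵢ = ∂ⱼ(w uᵢ vᵢ) + uᵢ vᵢ ∂ⱼw`.
Summing over `i` and `j`, the integrand becomes `∑ⱼ ∂ⱼ(ρ (u·v) uⱼ) + (u·v) div (ρ u)`, and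
`div (ρ u) = u·∇ρ` because `div u = 0`. Each `∂ⱼ(ρ (u·v) uⱼ)` is a partial derivative of a compactly
supported `C¹` function, so it integrates to zero.
-/

section

variable {d : ℕ} {x : Fin d → ℝ} {j : Fin d}

lemma pd_mul {f g : (Fin d → ℝ) → ℝ} (hf : DifferentiableAt ℝ f x) (hg : DifferentiableAt ℝ g x) :
    pd j (fun y => f y * g y) x = pd j f x * g x + f x * pd j g x := by
  simp only [pd, fderiv_fun_mul hf hg, add_apply, smul_apply, smul_eq_mul]
  ring

lemma pd_sum {ι : Type*} {s : Finset ι} {F : ι → (Fin d → ℝ) → ℝ}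
    (hF : ∀ i ∈ s, DifferentiableAt ℝ (F i) x) :
    pd j (fun y => ∑ i ∈ s, F i y) x = ∑ i ∈ s, pd j (F i) x := by
  simp only [pd, fderiv_fun_sum hF, sum_apply]

lemma pd_mul_mul_mul_add_pd_mul_mul_mul {w a b c : (Fin d → ℝ) → ℝ}
    (hw : DifferentiableAt ℝ w x) (ha : DifferentiableAt ℝ a x) (hb : DifferentiableAt ℝ b x)
    (hc : DifferentiableAt ℝ c x) :
    pd j (fun y => w y * a y * c y) x * b x + pd j (fun y => w y * b y * c y) x * a x =
      pd j (fun y => w y * (a y * b y) * c y) x + a x * b x * pd j (fun y => w y * c y) x := by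
  rw [pd_mul (hw.fun_mul ha) hc, pd_mul (hw.fun_mul hb) hc, pd_mul (hw.fun_mul (ha.fun_mul hb)) hc,
    pd_mul hw ha, pd_mul hw hb, pd_mul hw (ha.fun_mul hb), pd_mul ha hb, pd_mul hw hc]
  ring

lemma sum_pd_mul {w : (Fin d → ℝ) → ℝ} {u : (Fin d → ℝ) → Fin d → ℝ}
    (hw : DifferentiableAt ℝ w x) (hu : ∀ j, DifferentiableAt ℝ (fun y => u y j) x) :
    ∑ j, pd j (fun y => w y * u y j) x =
      ∑ j, u x j * pd j w x + w x * ∑ j, pd j (fun y => u y j) x := by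
  simp only [pd_mul hw (hu _), Finset.mul_sum, ← Finset.sum_add_distrib]
  exact Finset.sum_congr rfl fun j _ => by ring

lemma convection_pair_eq_div_add_of_div_eq_zero {ρ : (Fin d → ℝ) → ℝ}
    {u v : (Fin d → ℝ) → Fin d → ℝ}
    (hρ : DifferentiableAt ℝ ρ x) (hu : ∀ i, DifferentiableAt ℝ (fun y => u y i) x)
    (hv : ∀ i, DifferentiableAt ℝ (fun y => v y i) x)
    (hdiv : ∑ j, pd j (fun z => u z j) x = 0) :
    (∑ i, ∑ j, pd j (fun y => ρ y * u y i * u y j) x * v x i) +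
        (∑ i, ∑ j, pd j (fun y => ρ y * v y i * u y j) x * u x i) =
      ∑ j, pd j (fun y => ρ y * (∑ i, u y i * v y i) * u y j) x +
        (∑ i, u x i * v x i) * ∑ j, u x j * pd j ρ x := by
  have hdot (j : Fin d) : pd j (fun y => ρ y * (∑ i, u y i * v y i) * u y j) x =
      ∑ i, pd j (fun y => ρ y * (u y i * v y i) * u y j) x := by
    simp only [Finset.mul_sum, Finset.sum_mul]
    exact pd_sum fun i _ => (hρ.fun_mul ((hu i).fun_mul (hv i))).fun_mul (hu j)
  calc _ = ∑ j, ∑ i, (pd j (fun y => ρ y * u y i * u y j) x * v x i +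
          pd j (fun y => ρ y * v y i * u y j) x * u x i) := by
        rw [← Finset.sum_add_distrib, Finset.sum_comm]
        simp only [Finset.sum_add_distrib]
    _ = ∑ j, (pd j (fun y => ρ y * (∑ i, u y i * v y i) * u y j) x +
          (∑ i, u x i * v x i) * pd j (fun y => ρ y * u y j) x) := by
        simp only [pd_mul_mul_mul_add_pd_mul_mul_mul hρ (hu _) (hv _) (hu _),
          Finset.sum_add_distrib, hdot, Finset.sum_mul]
    _ = _ := by
        rw [Finset.sum_add_distrib, ← Finset.mul_sum, sum_pd_mul hρ hu, hdiv, mul_zero, add_zero]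

end

section

variable {d : ℕ} {f : (Fin d → ℝ) → ℝ}

lemma continuous_pd (hf : ContDiff ℝ 1 f) (j : Fin d) : Continuous (pd j f) :=
  (hf.continuous_fderiv one_ne_zero).clm_apply continuous_const

lemma HasCompactSupport.pd (hf : HasCompactSupport f) (j : Fin d) : HasCompactSupport (pd j f) :=
  hf.fderiv_apply ℝ (Pi.single j 1)

lemma integrable_pd_mul (hf : ContDiff ℝ 1 f) (hc : HasCompactSupport f) {g : (Fin d → ℝ) → ℝ}
    (hg : Continuous g) (j : Fin d) : Integrable (fun x => pd j f x * g x) :=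
  ((continuous_pd hf j).mul hg).integrable_of_hasCompactSupport (hc.pd j).mul_right

lemma integral_pd_eq_zero (hf : Differentiable ℝ f) (hfi : Integrable f) (j : Fin d)
    (hf'i : Integrable (pd j f)) : ∫ x, pd j f x = 0 := by
  simpa [pd] using integral_mul_fderiv_eq_neg_fderiv_mul_of_integrable (f := fun _ => (1 : ℝ))
    (v := Pi.single j 1) (by simp) (by simp only [one_mul]; exact hf'i) (by simpa using hfi)
    (fun x _ => differentiableAt_const 1) (fun x _ => hf x)

lemma integral_pd_eq_zero_of_hasCompactSupport (hf : ContDiff ℝ 1 f) (hc : HasCompactSupport f)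
    (j : Fin d) : ∫ x, pd j f x = 0 :=
  integral_pd_eq_zero (hf.differentiable one_ne_zero)
    (hf.continuous.integrable_of_hasCompactSupport hc) j
    ((continuous_pd hf j).integrable_of_hasCompactSupport (hc.pd j))

lemma integrable_sum_sum_pd_mul {F : Fin d → Fin d → (Fin d → ℝ) → ℝ}
    {G : Fin d → (Fin d → ℝ) → ℝ}
    (hF : ∀ i j, ContDiff ℝ 1 (F i j)) (hFc : ∀ i j, HasCompactSupport (F i j))
    (hG : ∀ i, Continuous (G i)) :
    Integrable (fun x => ∑ i, ∑ j, pd j (F i j) x * G i x) :=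
  integrable_finsetSum _ fun i _ => integrable_finsetSum _ fun j _ =>
    integrable_pd_mul (hF i j) (hFc i j) (hG i) j

lemma integral_eq_of_eq_sum_pd_add {f g : (Fin d → ℝ) → ℝ} {F : Fin d → (Fin d → ℝ) → ℝ}
    (h : ∀ x, f x = ∑ j, pd j (F j) x + g x) (hf : Integrable f)
    (hF : ∀ j, ContDiff ℝ 1 (F j)) (hFc : ∀ j, HasCompactSupport (F j)) :
    ∫ x, f x = ∫ x, g x := by
  have hpd : ∀ j ∈ Finset.univ, Integrable (pd j (F j)) := fun j _ =>
    (continuous_pd (hF j) j).integrable_of_hasCompactSupport ((hFc j).pd j)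
  have hg : g = fun x => f x - ∑ j, pd j (F j) x := funext fun x => by rw [h x]; ring
  rw [hg, integral_sub hf (integrable_finsetSum _ hpd), integral_finsetSum _ hpd,
    Finset.sum_eq_zero fun j _ => integral_pd_eq_zero_of_hasCompactSupport (hF j) (hFc j) j,
    sub_zero]

end

theorem stmt9_general {d : ℕ}
    (ρ : (Fin d → ℝ) → ℝ) (u v : (Fin d → ℝ) → Fin d → ℝ)
    (hρ : ContDiff ℝ 1 ρ) (hu : ContDiff ℝ 1 u) (hv : ContDiff ℝ 1 v)
    (hcs : HasCompactSupport u)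
    (hsol : ∀ y : Fin d → ℝ, ∑ j, pd j (fun z => u z j) y = 0) :
    ((∫ x : Fin d → ℝ,
        ((∑ i, ∑ j, pd j (fun y => ρ y * u y i * u y j) x * v x i) +
          (∑ i, ∑ j, pd j (fun y => ρ y * v y i * u y j) x * u x i))) =
      ∫ x : Fin d → ℝ, (∑ i, u x i * v x i) * (∑ j, u x j * pd j ρ x)) ∧
    (-(1 / 2) * (∫ x : Fin d → ℝ, ∑ i, ∑ j, pd j (fun y => ρ y * u y i * u y j) x * v x i)
      - 1 / 2 * (∫ x : Fin d → ℝ, ∑ i, ∑ j, pd j (fun y => ρ y * v y i * u y j) x * u x i)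
      + 1 / 2 * (∫ x : Fin d → ℝ, (∑ i, u x i * v x i) * (∑ j, u x j * pd j ρ x)) = 0) := by
  have hui : ∀ i, ContDiff ℝ 1 (fun y => u y i) := contDiff_pi.mp hu
  have hvi : ∀ i, ContDiff ℝ 1 (fun y => v y i) := contDiff_pi.mp hv
  have huc : ∀ i, HasCompactSupport (fun y => u y i) := fun i =>
    hcs.comp_left (g := fun w : Fin d → ℝ => w i) rfl
  have hconv := integrable_sum_sum_pd_mul (F := fun i j y => ρ y * u y i * u y j)
    (fun i j => (hρ.mul (hui i)).mul (hui j)) (fun i j => (huc j).mul_left)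
    (fun i => (hvi i).continuous)
  have hskew := integrable_sum_sum_pd_mul (F := fun i j y => ρ y * v y i * u y j)
    (fun i j => (hρ.mul (hvi i)).mul (hui j)) (fun i j => (huc j).mul_left)
    (fun i => (hui i).continuous)
  have hidentity := integral_eq_of_eq_sum_pd_add
    (fun x => convection_pair_eq_div_add_of_div_eq_zero (hρ.differentiable one_ne_zero x)
      (fun i => (hui i).differentiable one_ne_zero x)
      (fun i => (hvi i).differentiable one_ne_zero x) (hsol x))
    (hconv.add hskew)
    (fun j => (hρ.mul (ContDiff.sum fun i _ => (hui i).mul (hvi i))).mul (hui j))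
    (fun j => (huc j).mul_left)
  refine ⟨hidentity, ?_⟩
  rw [integral_add hconv hskew] at hidentity
  linarith

theorem stmt9 {d : ℕ} (hd : 1 ≤ d)
    (ρ : (Fin d → ℝ) → ℝ) (u v : (Fin d → ℝ) → Fin d → ℝ)
    (hρ : ContDiff ℝ 1 ρ) (hu : ContDiff ℝ 1 u) (hv : ContDiff ℝ 1 v)
    (hcs : HasCompactSupport u)
    (hsol : ∀ y : Fin d → ℝ, ∑ j, pd j (fun z => u z j) y = 0) :
    ((∫ x : Fin d → ℝ,
        ((∑ i, ∑ j, pd j (fun y => ρ y * u y i * u y j) x * v x i) +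
          (∑ i, ∑ j, pd j (fun y => ρ y * v y i * u y j) x * u x i))) =
      ∫ x : Fin d → ℝ, (∑ i, u x i * v x i) * (∑ j, u x j * pd j ρ x)) ∧
    (-(1 / 2) * (∫ x : Fin d → ℝ, ∑ i, ∑ j, pd j (fun y => ρ y * u y i * u y j) x * v x i)
      - 1 / 2 * (∫ x : Fin d → ℝ, ∑ i, ∑ j, pd j (fun y => ρ y * v y i * u y j) x * u x i)
      + 1 / 2 * (∫ x : Fin d → ℝ, (∑ i, u x i * v x i) * (∑ j, u x j * pd j ρ x)) = 0) :=
  stmt9_general ρ u v hρ hu hv hcs hsol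
end
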